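/- The toric ideal I_G of a finite simple connected graph G is generated by the binomials B_w, where w ranges over the even closed walks of G. -/

import Mathlib

open MvPolynomial

noncomputable section

/-! ### Term orders, initial terms, (reduced) Gröbner bases, universal Gröbner basis -/

/-- A term order on the monomials (exponent vectors) in variables indexed by `σ`:
a linear order for which `0` is least and which is compatible with addition. -/
structure TermOrder (σ : Type*) where
  lo : LinearOrder (σ →₀ ℕ)
  zero_min : ∀ u : σ →₀ ℕ, lo.le 0 u
  add_right : ∀ u v w : σ →₀ ℕ, lo.le u v → lo.le (u + w) (v + w)

variable {σ : Type*} {K : Type*} [Field K]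

/-- The leading (largest) exponent of a polynomial with respect to a term order
(junk value `0` if `f = 0`). -/
def TermOrder.leadExp (t : TermOrder σ) (f : MvPolynomial σ K) : σ →₀ ℕ :=
  haveI := Classical.propDecidable (f = 0)
  if h : f = 0 then 0
  else @Finset.max' _ t.lo f.support
    (Finset.nonempty_iff_ne_empty.mpr fun he => h (MvPolynomial.support_eq_empty.mp he))

/-- The initial term of a polynomial with respect to a term order. -/
def TermOrder.initial (t : TermOrder σ) (f : MvPolynomial σ K) : MvPolynomial σ K :=
  monomial (t.leadExp f) (f.coeff (t.leadExp f))

/-- `𝒢` is a Gröbner basis of `I` w.r.t. the term order `t`. -/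
def IsGroebnerBasis (t : TermOrder σ) (I : Ideal (MvPolynomial σ K))
    (𝒢 : Finset (MvPolynomial σ K)) : Prop :=
  (𝒢 : Set (MvPolynomial σ K)) ⊆ (I : Set (MvPolynomial σ K)) ∧
    Ideal.span (t.initial '' (𝒢 : Set (MvPolynomial σ K))) =
      Ideal.span (t.initial '' (I : Set (MvPolynomial σ K)))

/-- `𝒢` is a reduced Gröbner basis of `I` w.r.t. `t`: a Gröbner basis, all of whose elements
are monic, and no monomial occurring in an element of `𝒢` is divisible by the initial term of
a different element of `𝒢`. -/
def IsReducedGroebnerBasis (t : TermOrder σ) (I : Ideal (MvPolynomial σ K))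
    (𝒢 : Finset (MvPolynomial σ K)) : Prop :=
  IsGroebnerBasis t I 𝒢 ∧
    (∀ g ∈ 𝒢, g.coeff (t.leadExp g) = 1) ∧
    (∀ g ∈ 𝒢, ∀ g' ∈ 𝒢, g' ≠ g → ∀ u ∈ g.support, ¬ t.leadExp g' ≤ u)

/-- The universal Gröbner basis of `I`: the union of all reduced Gröbner bases of `I`
over all term orders. -/
def UniversalGB (I : Ideal (MvPolynomial σ K)) : Set (MvPolynomial σ K) :=
  {f | ∃ (t : TermOrder σ) (𝒢 : Finset (MvPolynomial σ K)),
    IsReducedGroebnerBasis t I 𝒢 ∧ f ∈ 𝒢}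

/-! ### Binomials, primitive binomials (Graver basis), circuits -/

/-- The binomial `x^u - x^v`. -/
def binom (K : Type*) [Field K] {σ : Type*} (u v : σ →₀ ℕ) : MvPolynomial σ K :=
  monomial u 1 - monomial v 1

/-- `f` is a primitive binomial of `I`: `f = x^u - x^v ∈ I` and there is no other binomial
`x^w - x^z ∈ I` with `x^w ∣ x^u` and `x^z ∣ x^v`.  The set of primitive binomials of `I`
is the Graver basis of `I`. -/
def IsPrimitiveBinomial (I : Ideal (MvPolynomial σ K)) (f : MvPolynomial σ K) : Prop :=
  ∃ u v : σ →₀ ℕ, u ≠ v ∧ f = binom K u v ∧ f ∈ I ∧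
    ∀ w z : σ →₀ ℕ, w ≠ z → binom K w z ∈ I → w ≤ u → z ≤ v → w = u ∧ z = v

/-- `f` is a circuit of `I`: an irreducible binomial of `I` whose support (set of variables
occurring in it) is minimal among the supports of nonzero binomials of `I`. -/
def IsCircuitBinomial (I : Ideal (MvPolynomial σ K)) (f : MvPolynomial σ K) : Prop :=
  (∃ u v : σ →₀ ℕ, u ≠ v ∧ f = binom K u v) ∧ f ∈ I ∧ Irreducible f ∧
    ∀ g : MvPolynomial σ K, (∃ u v : σ →₀ ℕ, u ≠ v ∧ g = binom K u v) → g ∈ I →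
      g.vars ⊆ f.vars → g.vars = f.vars

/-- The toric ideal of a vector configuration `A = (a_1, …, a_m) ⊆ ℕ^n`: the ideal generated
by all binomials `x^u - x^v` with `Σ uᵢ aᵢ = Σ vᵢ aᵢ`. -/
def toricIdealOfConfig (K : Type*) [Field K] {m n : ℕ} (A : Fin m → Fin n → ℕ) :
    Ideal (MvPolynomial (Fin m) K) :=
  Ideal.span {f | ∃ u v : Fin m →₀ ℕ,
    f = binom K u v ∧ (∑ i, u i • A i) = ∑ i, v i • A i}

/-! ### Toric ideals of graphs -/

variable {V : Type*}

/-- The image `x_u * x_v` of an edge `e = {u, v}`. -/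
def edgeImage (K : Type*) [Field K] {V : Type*} (e : Sym2 V) : MvPolynomial V K :=
  Sym2.lift ⟨fun a b => X a * X b, fun a b => mul_comm _ _⟩ e

/-- The toric ideal `I_G` of a graph `G`: the kernel of the `K`-algebra map
`K[e : e ∈ E(G)] → K[x_v : v ∈ V(G)]`, `e = {u,v} ↦ x_u x_v`. -/
def graphToricIdeal (K : Type*) [Field K] (G : SimpleGraph V) :
    Ideal (MvPolynomial G.edgeSet K) :=
  RingHom.ker (MvPolynomial.aeval
    (fun e : G.edgeSet => edgeImage K (e : Sym2 V)) :
      MvPolynomial G.edgeSet K →ₐ[K] MvPolynomial V K).toRingHom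

/-- An even closed walk `(v_0, v_1, …, v_{2q} = v_0)` in a graph `G`;
edges and vertices may repeat. -/
structure EvenClosedWalk (G : SimpleGraph V) where
  q : ℕ
  verts : ℕ → V
  adj : ∀ i, i < 2 * q → G.Adj (verts i) (verts (i + 1))
  closed : verts (2 * q) = verts 0

namespace EvenClosedWalk

variable {G : SimpleGraph V}

/-- The `i`-th edge of the walk, as an element of the edge set of `G`. -/
def edge (w : EvenClosedWalk G) (i : ℕ) (h : i < 2 * w.q) : G.edgeSet :=
  ⟨s(w.verts i, w.verts (i + 1)), w.adj i h⟩

/-- The exponent vector `w⁺` of the monomial `E⁺(w)`, the product of the edges of `w`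
in odd position (`1`-indexed). -/
def plusExp (w : EvenClosedWalk G) : G.edgeSet →₀ ℕ :=
  ∑ k : Fin w.q, Finsupp.single (w.edge (2 * (k : ℕ)) (by have := k.isLt; omega)) 1

/-- The exponent vector `w⁻` of the monomial `E⁻(w)`, the product of the edges of `w`
in even position (`1`-indexed). -/
def minusExp (w : EvenClosedWalk G) : G.edgeSet →₀ ℕ :=
  ∑ k : Fin w.q, Finsupp.single (w.edge (2 * (k : ℕ) + 1) (by have := k.isLt; omega)) 1

end EvenClosedWalk

/-- The monomial `E⁺(w)`. -/
def Eplus (K : Type*) [Field K] {G : SimpleGraph V} (w : EvenClosedWalk G) :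
    MvPolynomial G.edgeSet K :=
  monomial w.plusExp 1

/-- The monomial `E⁻(w)`. -/
def Eminus (K : Type*) [Field K] {G : SimpleGraph V} (w : EvenClosedWalk G) :
    MvPolynomial G.edgeSet K :=
  monomial w.minusExp 1

/-- The binomial `B_w = E⁺(w) - E⁻(w)` of an even closed walk. -/
def Bw (K : Type*) [Field K] {G : SimpleGraph V} (w : EvenClosedWalk G) :
    MvPolynomial G.edgeSet K :=
  binom K w.plusExp w.minusExp

namespace EvenClosedWalk

variable {G : SimpleGraph V}

/-- The number of positions of the walk at which the edge `e` appears. -/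
def count [DecidableEq V] (w : EvenClosedWalk G) (e : Sym2 V) : ℕ :=
  ((Finset.range (2 * w.q)).filter fun i => e = s(w.verts i, w.verts (i + 1))).card

/-- The subgraph `𝐰` of `G` spanned by the edges of the walk `w`. -/
def graph (w : EvenClosedWalk G) : SimpleGraph V :=
  SimpleGraph.fromEdgeSet {e | ∃ i, ∃ _ : i < 2 * w.q, e = s(w.verts i, w.verts (i + 1))}

/-- The set `w⁺` of edges of `w` in odd position (`1`-indexed). -/
def plusEdges (w : EvenClosedWalk G) : Set (Sym2 V) :=
  {e | ∃ k, ∃ _ : k < w.q, e = s(w.verts (2 * k), w.verts (2 * k + 1))}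

/-- The set `w⁻` of edges of `w` in even position (`1`-indexed). -/
def minusEdges (w : EvenClosedWalk G) : Set (Sym2 V) :=
  {e | ∃ k, ∃ _ : k < w.q, e = s(w.verts (2 * k + 1), w.verts (2 * k + 2))}

/-- An even closed walk is primitive if it is nontrivial and there is no even closed
subwalk `ξ` of smaller length with `E⁺(ξ) ∣ E⁺(w)` and `E⁻(ξ) ∣ E⁻(w)`. -/
def IsPrimitive (w : EvenClosedWalk G) : Prop :=
  0 < w.q ∧ ∀ ξ : EvenClosedWalk G, 0 < ξ.q → ξ.q < w.q →
    ¬(ξ.plusExp ≤ w.plusExp ∧ ξ.minusExp ≤ w.minusExp)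

/-- The walk `w` is a cycle: it visits no vertex twice. -/
def IsCycle (w : EvenClosedWalk G) : Prop :=
  2 ≤ w.q ∧ ∀ i j, i < 2 * w.q → j < 2 * w.q → w.verts i = w.verts j → i = j

end EvenClosedWalk

/-! ### Cut vertices, cut edges, blocks, sinks -/

/-- `v` is a cut vertex of `H`: removing `v` (and the edges through it) disconnects two
vertices different from `v` that were connected in `H`. -/
def IsCutVertex (H : SimpleGraph V) (v : V) : Prop :=
  ∃ a b, a ≠ v ∧ b ≠ v ∧ H.Reachable a b ∧
    ¬(SimpleGraph.fromEdgeSet {e | e ∈ H.edgeSet ∧ v ∉ e}).Reachable a b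

/-- `e` is a cut edge of `H`: removing it disconnects two vertices connected in `H`. -/
def IsCutEdge (H : SimpleGraph V) (e : Sym2 V) : Prop :=
  e ∈ H.edgeSet ∧ ∃ a b, H.Reachable a b ∧ ¬(H.deleteEdges {e}).Reachable a b

/-- `H` is biconnected: it has an edge, it is connected (on its support),
and it has no cut vertex. -/
def IsBiconnected (H : SimpleGraph V) : Prop :=
  H.edgeSet.Nonempty ∧ (∀ a ∈ H.support, ∀ b ∈ H.support, H.Reachable a b) ∧
    ∀ v, ¬IsCutVertex H v

/-- `B` is a block of `H`: a maximal biconnected subgraph. -/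
def IsBlock (H B : SimpleGraph V) : Prop :=
  B ≤ H ∧ IsBiconnected B ∧ ∀ B', B ≤ B' → B' ≤ H → IsBiconnected B' → B' = B

/-- A graph is a cycle (graph): its edge set is the edge set of a cycle of length `≥ 3`. -/
def IsCycleGraph (B : SimpleGraph V) : Prop :=
  ∃ (n : ℕ) (f : ℕ → V), 3 ≤ n ∧
    (∀ i j, i < n → j < n → f i = f j → i = j) ∧
    B.edgeSet = {e | ∃ i, ∃ _ : i < n, e = s(f i, f ((i + 1) % n))}

/-- `v` is a sink of the block `B` of the walk `w`: a common vertex of two odd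
(or two even) edges of the walk belonging to `B`. -/
def IsSinkOf {G : SimpleGraph V} (w : EvenClosedWalk G) (B : SimpleGraph V) (v : V) : Prop :=
  ∃ e₁ e₂ : Sym2 V, e₁ ≠ e₂ ∧ e₁ ∈ B.edgeSet ∧ e₂ ∈ B.edgeSet ∧ v ∈ e₁ ∧ v ∈ e₂ ∧
    ((e₁ ∈ w.plusEdges ∧ e₂ ∈ w.plusEdges) ∨ (e₁ ∈ w.minusEdges ∧ e₂ ∈ w.minusEdges))

/-- `B` is a pure cyclic block of the walk `w`: a block of `𝐰` which is a cycle all of whose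
edges lie in `w⁺`, or all in `w⁻`. -/
def IsPureCyclicBlock {G : SimpleGraph V} (w : EvenClosedWalk G) (B : SimpleGraph V) : Prop :=
  IsBlock w.graph B ∧ IsCycleGraph B ∧
    (B.edgeSet ⊆ w.plusEdges ∨ B.edgeSet ⊆ w.minusEdges)

/-- A primitive walk is mixed if it has no pure cyclic block. -/
def EvenClosedWalk.IsMixed {G : SimpleGraph V} (w : EvenClosedWalk G) : Prop :=
  ∀ B : SimpleGraph V, ¬IsPureCyclicBlock w B


/-! Evaluating a monomial `x^u` in the edge variables gives the monomial whose exponent is the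
degree vector of the edge multiset `u`, so the kernel is spanned by the binomials `x^u - x^v` for
which `u` and `v` have the same degree vector. For such `u ≠ 0`, walking alternately along an edge
of `u` and an edge of `v` is always possible because the degrees balance, and it can only stop by
returning to its start: this yields an even closed walk `w` with `E⁺(w) ∣ x^u` and `E⁻(w) ∣ x^v`.
Writing `u = w⁺ + a`, `v = w⁻ + b` gives `x^u - x^v = x^a B_w + E⁻(w) (x^a - x^b)`, and induction
on the degree finishes the proof. -/

open Finsupp (single)

lemma ker_le_span_binom {τ : Type*} (φ : MvPolynomial σ K →ₐ[K] MvPolynomial τ K)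
    (D : (σ →₀ ℕ) → τ →₀ ℕ) (hφ : ∀ m c, φ (monomial m c) = monomial (D m) c) :
    RingHom.ker φ ≤ Ideal.span {g | ∃ u v, D u = D v ∧ g = binom K u v} := by
  intro f hf
  -- `S` sends `x^d` to `x^s` for one chosen `s` with `D s = d`, so `g - S (φ g)` is a
  -- combination of binomials `x^m - x^s` with `D m = D s`.
  let S := AddMonoidAlgebra.mapDomainLinearMap K K (Function.invFun D)
  suffices ∀ g, g - S (φ g) ∈ Ideal.span {g | ∃ u v, D u = D v ∧ g = binom K u v} by
    simpa [RingHom.mem_ker.mp hf] using this f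
  intro g
  induction g using MvPolynomial.induction_on' with
  | monomial m c =>
    have hD : D (Function.invFun D (D m)) = D m := Function.invFun_eq ⟨m, rfl⟩
    have : monomial m c - S (φ (monomial m c)) = C c * binom K m (Function.invFun D (D m)) := by
      rw [hφ, binom, mul_sub, C_mul_monomial, C_mul_monomial, mul_one]
      exact congrArg _ (AddMonoidAlgebra.mapDomainLinearMap_single _ _ _)
    rw [this]
    exact Ideal.mul_mem_left _ _ (Ideal.subset_span ⟨_, _, hD.symm, rfl⟩)
  | add p q hp hq =>
    rw [map_add, map_add, add_sub_add_comm]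
    exact add_mem hp hq

lemma binom_add_add (a b p q : σ →₀ ℕ) :
    binom K (a + p) (b + q) = monomial a 1 * binom K p q + monomial q 1 * binom K a b := by
  simp only [binom, mul_sub, monomial_mul, one_mul]
  rw [add_comm q a, add_comm q b]
  ring

def edgeExp : Sym2 V → V →₀ ℕ :=
  Sym2.lift ⟨fun a b => single a 1 + single b 1, fun _ _ => add_comm _ _⟩

@[simp]
lemma edgeExp_mk (a b : V) : edgeExp s(a, b) = single a 1 + single b 1 := rfl

lemma edgeImage_eq_monomial (e : Sym2 V) : edgeImage K e = monomial (edgeExp e) 1 := by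
  induction e using Sym2.ind with
  | h a b => simp [edgeImage, X, monomial_mul]

lemma degree_edgeExp (e : Sym2 V) : (edgeExp e).degree = 2 := by
  induction e using Sym2.ind with
  | h a b => simp

lemma mem_of_edgeExp_apply_ne_zero {e : Sym2 V} {x : V} (h : edgeExp e x ≠ 0) : x ∈ e := by
  induction e using Sym2.ind with
  | h a b =>
    contrapose! h
    simp_all

def degVec : (Sym2 V →₀ ℕ) →ₗ[ℕ] V →₀ ℕ := Finsupp.linearCombination ℕ edgeExp

lemma degVec_single (e : Sym2 V) (n : ℕ) : degVec (single e n) = n • edgeExp e :=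
  Finsupp.linearCombination_single ℕ n e

lemma degVec_add_single_mk (U : Sym2 V →₀ ℕ) (a b : V) :
    degVec (U + single s(a, b) 1) = degVec U + single a 1 + single b 1 := by
  rw [map_add, degVec_single, one_smul, edgeExp_mk, add_assoc]

lemma degree_degVec (U : Sym2 V →₀ ℕ) : (degVec U).degree = 2 * U.degree := by
  induction U using Finsupp.induction_linear with
  | zero => simp
  | add U U' hU hU' => simp only [map_add, hU, hU', mul_add]
  | single e n => simp [degVec_single, degree_edgeExp, mul_comm]

lemma degVec_eq_zero_iff {U : Sym2 V →₀ ℕ} : degVec U = 0 ↔ U = 0 := by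
  rw [← Finsupp.degree_eq_zero_iff, degree_degVec, ← Finsupp.degree_eq_zero_iff]
  omega

lemma exists_eq_add_single_of_degVec_ne_zero {U : Sym2 V →₀ ℕ} {x : V} (h : degVec U x ≠ 0) :
    ∃ y U', U = U' + single s(x, y) 1 := by
  rw [degVec, Finsupp.linearCombination_apply, Finsupp.sum, Finsupp.finsetSum_apply] at h
  obtain ⟨e, he, hx⟩ := Finset.exists_ne_zero_of_sum_ne_zero h
  have hxe := mem_of_edgeExp_apply_ne_zero (right_ne_zero_of_mul (by simpa using hx))
  refine ⟨Sym2.Mem.other hxe, U - single e 1, ?_⟩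
  rw [Sym2.other_spec hxe, tsub_add_cancel_of_le]
  exact Finsupp.single_le_iff.mpr (Nat.one_le_iff_ne_zero.mpr (Finsupp.mem_support_iff.mp he))

def oddEdges (f : ℕ → V) (n : ℕ) : Sym2 V →₀ ℕ :=
  ∑ k ∈ Finset.range n, single s(f (2 * k), f (2 * k + 1)) 1

lemma oddEdges_succ' (f : ℕ → V) (n : ℕ) :
    oddEdges f (n + 1) = single s(f 0, f 1) 1 + oddEdges (fun i => f (i + 2)) n := by
  rw [oddEdges, Finset.sum_range_succ', add_comm]
  rfl

lemma single_le_oddEdges (f : ℕ → V) {n k : ℕ} (hk : k < n) :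
    single s(f (2 * k), f (2 * k + 1)) 1 ≤ oddEdges f n :=
  Finset.single_le_sum (f := fun k => single s(f (2 * k), f (2 * k + 1)) 1)
    (fun _ _ => zero_le) (Finset.mem_range.mpr hk)

lemma degVec_oddEdges (f : ℕ → V) (n : ℕ) :
    degVec (oddEdges f n) = ∑ i ∈ Finset.range (2 * n), single (f i) 1 := by
  induction n with
  | zero => simp [oddEdges]
  | succ n ih =>
    rw [oddEdges, Finset.sum_range_succ, map_add, ← oddEdges, ih, degVec_single, one_smul,
      edgeExp_mk, mul_add, Finset.sum_range_succ, Finset.sum_range_succ, add_assoc]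

lemma degVec_oddEdges_succ {f : ℕ → V} {n : ℕ} (hf : f (2 * n) = f 0) :
    degVec (oddEdges (fun i => f (i + 1)) n) = degVec (oddEdges f n) := by
  rw [degVec_oddEdges, degVec_oddEdges]
  apply add_right_cancel (b := single (f 0) 1)
  rw [← Finset.sum_range_succ' (fun i => single (f i) 1), Finset.sum_range_succ, hf]

lemma exists_alternating_path {U W : Sym2 V →₀ ℕ} {a b : V}
    (h : degVec W = degVec U + single a 1 + single b 1) :
    ∃ m f, f 0 = b ∧ f (2 * m + 1) = a ∧
      oddEdges f (m + 1) ≤ W ∧ oddEdges (fun i => f (i + 1)) m ≤ U := by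
  induction hW : W.degree using Nat.strong_induction_on generalizing U W b with
  | _ n ih =>
  obtain ⟨c, W', rfl⟩ : ∃ c W', W = W' + single s(b, c) 1 :=
    exists_eq_add_single_of_degVec_ne_zero (by simp [h])
  rw [degVec_add_single_mk] at h
  have hc : degVec W' + single c 1 = degVec U + single a 1 :=
    add_right_cancel (b := single b 1) (by rw [← h]; abel)
  by_cases hca : c = a
  · subst hca
    refine ⟨0, fun | 0 => b | _ + 1 => c, rfl, rfl, ?_, by simp [oddEdges]⟩
    simp [oddEdges]
  · obtain ⟨d, U', rfl⟩ : ∃ d U', U = U' + single s(c, d) 1 := by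
      refine exists_eq_add_single_of_degVec_ne_zero ?_
      have := congr($hc c)
      simp [Ne.symm hca] at this
      omega
    rw [degVec_add_single_mk] at hc
    have hd : degVec W' = degVec U' + single a 1 + single d 1 :=
      add_right_cancel (b := single c 1) (by rw [hc]; abel)
    obtain ⟨m, f, hf0, hfa, hW', hU'⟩ := ih W'.degree (by simp [← hW]) hd rfl
    refine ⟨m + 1, fun | 0 => b | 1 => c | i + 2 => f i, rfl, hfa, ?_, ?_⟩
    · rw [oddEdges_succ', add_comm]
      exact add_le_add hW' le_rfl
    · rw [oddEdges_succ', add_comm]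
      show oddEdges (fun i => f (i + 1)) m + single s(c, f 0) 1 ≤ _
      rw [hf0]
      exact add_le_add hU' le_rfl

lemma exists_closed_alternating {U W : Sym2 V →₀ ℕ} (hU : U ≠ 0) (h : degVec U = degVec W) :
    ∃ n f, 0 < n ∧ f (2 * n) = f 0 ∧ oddEdges f n ≤ U ∧ oddEdges (fun i => f (i + 1)) n ≤ W := by
  obtain ⟨x, hx⟩ := Finsupp.ne_iff.mp (degVec_eq_zero_iff.not.mpr hU)
  obtain ⟨y, U', rfl⟩ := exists_eq_add_single_of_degVec_ne_zero hx
  rw [degVec_add_single_mk] at h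
  obtain ⟨m, f, hf0, hfx, hW, hU'⟩ := exists_alternating_path h.symm
  refine ⟨m + 1, fun | 0 => x | i + 1 => f i, m.succ_pos, hfx, ?_, hW⟩
  rw [oddEdges_succ', add_comm]
  show oddEdges (fun i => f (i + 1)) m + single s(x, f 0) 1 ≤ _
  rw [hf0]
  exact add_le_add hU' le_rfl

section Graph

variable {G : SimpleGraph V}

variable (G) in
def edgeDegVec : (G.edgeSet →₀ ℕ) →+ V →₀ ℕ :=
  degVec.toAddMonoidHom.comp (Finsupp.mapDomain.addMonoidHom Subtype.val)

lemma edgeDegVec_apply (u : G.edgeSet →₀ ℕ) : edgeDegVec G u = degVec (u.mapDomain Subtype.val) :=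
  rfl

lemma aeval_edgeImage_monomial (u : G.edgeSet →₀ ℕ) (c : K) :
    aeval (fun e : G.edgeSet => edgeImage K (e : Sym2 V)) (monomial u c) =
      monomial (edgeDegVec G u) c := by
  rw [aeval_monomial, edgeDegVec_apply, degVec, Finsupp.linearCombination_mapDomain,
    Finsupp.linearCombination_apply, monomial_finsupp_sum_index, algebraMap_eq]
  simp [edgeImage_eq_monomial, monomial_pow]

lemma adj_of_oddEdges_le_mapDomain {f : ℕ → V} {n k : ℕ} {u : G.edgeSet →₀ ℕ}
    (h : oddEdges f n ≤ u.mapDomain Subtype.val) (hk : k < n) :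
    G.Adj (f (2 * k)) (f (2 * k + 1)) := by
  have hpos : u.mapDomain Subtype.val s(f (2 * k), f (2 * k + 1)) ≠ 0 := by
    have := (single_le_oddEdges f hk).trans h s(f (2 * k), f (2 * k + 1))
    simp only [Finsupp.single_eq_same] at this
    omega
  by_contra hne
  exact hpos (Finsupp.mapDomain_of_notMem_range _ _ (by simpa using hne))

namespace EvenClosedWalk

lemma mapDomain_plusExp (w : EvenClosedWalk G) :
    w.plusExp.mapDomain Subtype.val = oddEdges w.verts w.q := by
  rw [plusExp, Finsupp.mapDomain_finsetSum, oddEdges, ← Fin.sum_univ_eq_sum_range]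
  simp [Finsupp.mapDomain_single, edge]

lemma mapDomain_minusExp (w : EvenClosedWalk G) :
    w.minusExp.mapDomain Subtype.val = oddEdges (fun i => w.verts (i + 1)) w.q := by
  rw [minusExp, Finsupp.mapDomain_finsetSum, oddEdges, ← Fin.sum_univ_eq_sum_range]
  simp [Finsupp.mapDomain_single, edge]

lemma edgeDegVec_plusExp (w : EvenClosedWalk G) :
    edgeDegVec G w.plusExp = edgeDegVec G w.minusExp := by
  rw [edgeDegVec_apply, edgeDegVec_apply, mapDomain_plusExp, mapDomain_minusExp,
    degVec_oddEdges_succ w.closed]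

lemma degree_plusExp (w : EvenClosedWalk G) : w.plusExp.degree = w.q := by
  simp [plusExp]

end EvenClosedWalk

lemma Bw_mem_graphToricIdeal (w : EvenClosedWalk G) : Bw K w ∈ graphToricIdeal K G := by
  rw [graphToricIdeal, RingHom.mem_ker, AlgHom.toRingHom_eq_coe, RingHom.coe_coe, Bw, binom,
    map_sub, aeval_edgeImage_monomial, aeval_edgeImage_monomial, w.edgeDegVec_plusExp, sub_self]

lemma exists_evenClosedWalk_le {u v : G.edgeSet →₀ ℕ} (hu : u ≠ 0)
    (h : edgeDegVec G u = edgeDegVec G v) :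
    ∃ w : EvenClosedWalk G, 0 < w.q ∧ w.plusExp ≤ u ∧ w.minusExp ≤ v := by
  have hinj := Finsupp.mapDomain_injective (M := ℕ) (Subtype.val_injective (p := (· ∈ G.edgeSet)))
  obtain ⟨n, f, hn, hclosed, hfu, hfv⟩ :=
    exists_closed_alternating (hinj.ne_iff' Finsupp.mapDomain_zero |>.mpr hu) h
  let w : EvenClosedWalk G :=
    { q := n
      verts := f
      closed := hclosed
      adj := fun i hi => by
        obtain ⟨k, rfl | rfl⟩ := Nat.even_or_odd' i
        · exact adj_of_oddEdges_le_mapDomain hfu (by omega)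
        · exact adj_of_oddEdges_le_mapDomain (f := fun i => f (i + 1)) hfv (by omega) }
  refine ⟨w, hn, ?_, ?_⟩
  · rw [← Finsupp.mapDomain_le_mapDomain_iff_le Subtype.val_injective, w.mapDomain_plusExp]
    exact hfu
  · rw [← Finsupp.mapDomain_le_mapDomain_iff_le Subtype.val_injective, w.mapDomain_minusExp]
    exact hfv

lemma binom_mem_span_Bw {u v : G.edgeSet →₀ ℕ} (h : edgeDegVec G u = edgeDegVec G v) :
    binom K u v ∈ Ideal.span {f | ∃ w : EvenClosedWalk G, f = Bw K w} := by
  induction hu : u.degree using Nat.strong_induction_on generalizing u v with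
  | _ n ih =>
  by_cases hu0 : u = 0
  · have hv0 : v = 0 := by
      rw [hu0, map_zero, eq_comm, edgeDegVec_apply, degVec_eq_zero_iff] at h
      exact Finsupp.mapDomain_injective Subtype.val_injective (h.trans Finsupp.mapDomain_zero.symm)
    rw [hu0, hv0, binom, sub_self]
    exact zero_mem _
  obtain ⟨w, hq, hp, hm⟩ := exists_evenClosedWalk_le hu0 h
  obtain ⟨a, rfl⟩ := exists_add_of_le hp
  obtain ⟨b, rfl⟩ := exists_add_of_le hm
  have hab : edgeDegVec G a = edgeDegVec G b := by
    rwa [map_add, map_add, w.edgeDegVec_plusExp, add_right_inj] at h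
  rw [add_comm w.plusExp, add_comm w.minusExp, binom_add_add]
  refine add_mem (Ideal.mul_mem_left _ _ (Ideal.subset_span ⟨w, rfl⟩))
    (Ideal.mul_mem_left _ _ (ih a.degree ?_ hab rfl))
  rw [← hu, map_add, w.degree_plusExp]
  omega

end Graph

theorem graphToricIdeal_eq_span_Bw_general {V : Type*} (G : SimpleGraph V) (K : Type*) [Field K] :
    graphToricIdeal K G =
      Ideal.span {f : MvPolynomial G.edgeSet K | ∃ w : EvenClosedWalk G, f = Bw K w} := by
  refine le_antisymm ((ker_le_span_binom _ _ aeval_edgeImage_monomial).trans ?_)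
    (Ideal.span_le.mpr ?_)
  · rw [Ideal.span_le]
    rintro _ ⟨u, v, huv, rfl⟩
    exact binom_mem_span_Bw huv
  · rintro _ ⟨w, rfl⟩
    exact Bw_mem_graphToricIdeal w

/-- The toric ideal `I_G` of a finite simple connected graph `G` is generated
by the binomials `B_w`, `w` an even closed walk of `G`. -/
theorem graphToricIdeal_eq_span_Bw {V : Type*} [Fintype V] (G : SimpleGraph V)
    (hG : G.Connected) (K : Type*) [Field K] :
    graphToricIdeal K G =
      Ideal.span {f : MvPolynomial G.edgeSet K | ∃ w : EvenClosedWalk G, f = Bw K w} :=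
  graphToricIdeal_eq_span_Bw_general G K

end
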